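/- arXiv:2407.18027 — 3 statements merged into one kernel-verified Lean document; each statement's English description precedes it below -/
import Mathlib

section
/- Let m ≥ 1 and n ≥ 2, and equip F_m and F_n with the bi-invariant word metrics associated with their standard generating sets. Any group homomorphism ρ : F_m → F_n whose image is a proper subgroup of finite index in F_n is not a quasi-isometric embedding. -/
/-- The set of conjugates of elements of `S ∪ S⁻¹`. -/
def conjGens {G : Type*} [Group G] (S : Set G) : Set G :=
  {x | ∃ g s : G, (s ∈ S ∨ s⁻¹ ∈ S) ∧ x = g * s * g⁻¹}

/-- The conjugation-invariant word norm associated to a normally generating set `S`: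
the least `k` such that `g` is a product of `k` conjugates of elements of `S ∪ S⁻¹`. -/
noncomputable def ciNorm {G : Type*} [Group G] (S : Set G) (g : G) : ℕ :=
  sInf {k | ∃ f : Fin k → G, (∀ i, f i ∈ conjGens S) ∧ (List.ofFn f).prod = g}

/-- The bi-invariant word metric associated to `S`. -/
noncomputable def ciDist {G : Type*} [Group G] (S : Set G) (g h : G) : ℝ :=
  (ciNorm S (g * h⁻¹) : ℝ)

/-- The bi-invariant word metric on the free group on `Fin n`,
associated with the standard generating set. -/
noncomputable def freeDist (n : ℕ) (g h : FreeGroup (Fin n)) : ℝ :=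
  ciDist (Set.range (FreeGroup.of : Fin n → FreeGroup (Fin n))) g h

/-- A quasi-isometric embedding between spaces with distance functions `d₁`, `d₂`. -/
def IsQuasiIsometricEmbedding {X Y : Type*} (d₁ : X → X → ℝ) (d₂ : Y → Y → ℝ)
    (φ : X → Y) : Prop :=
  ∃ C > (0:ℝ), ∃ D ≥ (0:ℝ), ∀ x y : X,
    (1/C) * d₁ x y - D ≤ d₂ (φ x) (φ y) ∧ d₂ (φ x) (φ y) ≤ C * d₁ x y + D

/-- Quasi-surjectivity of a map into a space with distance function `d₂`. -/
def IsQuasiSurjective {X Y : Type*} (d₂ : Y → Y → ℝ) (φ : X → Y) : Prop :=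
  ∃ B ≥ (0:ℝ), ∀ y : Y, ∃ x : X, d₂ (φ x) y ≤ B

/-!
Put `H = ρ(F_m)` and let `F_n` act on the finite set `Q = F_n ⧸ H`, which has at least two
points. Weights `ω` on the edges of the Schreier graph of `Q` give a cocycle `L g d`: the
`ω`-length of the path read off from `g` at `d`. Since `H` fixes the coset `H`, the map
`g ↦ L g H` is additive on `H`, so its pullback along `ρ` is a homomorphism `F_m → ℝ`, hence
Lipschitz for the bi-invariant norm. A quasi-isometric embedding would therefore force it to be
bounded on those `x` for which `‖ρ x‖` is bounded.

On the other hand, for `b` acting trivially on `Q` the elements `u * ⁅b ^ k, v⁆ * u⁻¹` lie in `H`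
and have norm at most `2 ‖v‖`, while `L` takes the value `k * (L b d - L b e)` on them, where
`d = u⁻¹ H` and `e = v⁻¹ d`. With two free generators one can choose `ω` and `b` so that
`L b` is not constant, and these values are unbounded.
-/

open FreeGroup (of)
open scoped commutatorElement

section ConjugationInvariantNorm

variable {G : Type*} [Group G] {S : Set G}

lemma inv_mem_conjGens {a : G} (h : a ∈ conjGens S) : a⁻¹ ∈ conjGens S := by
  obtain ⟨g, s, hs, rfl⟩ := h
  exact ⟨g, s⁻¹, by rwa [inv_inv, or_comm], by group⟩

lemma conj_mem_conjGens (g : G) {a : G} (h : a ∈ conjGens S) : g * a * g⁻¹ ∈ conjGens S := by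
  obtain ⟨c, s, hs, rfl⟩ := h
  exact ⟨g * c, s, hs, by group⟩

lemma ciNorm_prod_le_length (l : List G) (hl : ∀ a ∈ l, a ∈ conjGens S) :
    ciNorm S l.prod ≤ l.length :=
  Nat.sInf_le ⟨l.get, fun i => hl _ (l.get_mem i), by rw [List.ofFn_get]⟩

lemma exists_list_conjGens_prod_eq (hS : Subgroup.normalClosure S = ⊤) (g : G) :
    ∃ l : List G, (∀ a ∈ l, a ∈ conjGens S) ∧ l.prod = g := by
  have hle : Subgroup.normalClosure S ≤ Subgroup.closure (conjGens S) := by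
    refine Subgroup.closure_mono fun x hx => ?_
    obtain ⟨s, hs, hconj⟩ := Group.mem_conjugatesOfSet_iff.mp hx
    obtain ⟨c, rfl⟩ := isConj_iff.mp hconj
    exact ⟨c, s, Or.inl hs, rfl⟩
  have hg : g ∈ (Subgroup.closure (conjGens S)).toSubmonoid := hle (hS ▸ Subgroup.mem_top g)
  rw [Subgroup.closure_toSubmonoid] at hg
  obtain ⟨l, hl, rfl⟩ := Submonoid.exists_list_of_mem_closure hg
  refine ⟨l, fun a ha => ?_, rfl⟩
  rcases hl a ha with h | h
  · exact h
  · simpa using inv_mem_conjGens (Set.mem_inv.mp h)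

lemma exists_list_conjGens_length_eq_ciNorm (hS : Subgroup.normalClosure S = ⊤) (g : G) :
    ∃ l : List G, (∀ a ∈ l, a ∈ conjGens S) ∧ l.prod = g ∧ l.length = ciNorm S g := by
  obtain ⟨l, hl, hprod⟩ := exists_list_conjGens_prod_eq hS g
  obtain ⟨f, hf, hfprod⟩ : ciNorm S g ∈ {k | ∃ f : Fin k → G, (∀ i, f i ∈ conjGens S) ∧
      (List.ofFn f).prod = g} :=
    Nat.sInf_mem ⟨l.length, l.get, fun i => hl _ (l.get_mem i), by rw [List.ofFn_get, hprod]⟩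
  exact ⟨List.ofFn f, by simpa [List.mem_ofFn] using hf, hfprod, List.length_ofFn⟩

variable (hS : Subgroup.normalClosure S = ⊤)
include hS

lemma ciNorm_mul_le (a b : G) : ciNorm S (a * b) ≤ ciNorm S a + ciNorm S b := by
  obtain ⟨l₁, hl₁, rfl, hlen₁⟩ := exists_list_conjGens_length_eq_ciNorm hS a
  obtain ⟨l₂, hl₂, rfl, hlen₂⟩ := exists_list_conjGens_length_eq_ciNorm hS b
  rw [← hlen₁, ← hlen₂, ← List.prod_append, ← List.length_append]
  exact ciNorm_prod_le_length _ fun x hx => (List.mem_append.mp hx).elim (hl₁ x) (hl₂ x)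

lemma ciNorm_inv_le (a : G) : ciNorm S a⁻¹ ≤ ciNorm S a := by
  obtain ⟨l, hl, rfl, hlen⟩ := exists_list_conjGens_length_eq_ciNorm hS a
  rw [← hlen, List.prod_inv_reverse, ← List.length_map (f := fun x : G => x⁻¹),
    ← List.length_reverse]
  exact ciNorm_prod_le_length _ fun x hx => by
    obtain ⟨y, hy, rfl⟩ := List.mem_map.mp (List.mem_reverse.mp hx)
    exact inv_mem_conjGens (hl y hy)

lemma ciNorm_conj_le (g a : G) : ciNorm S (g * a * g⁻¹) ≤ ciNorm S a := by
  obtain ⟨l, hl, rfl, hlen⟩ := exists_list_conjGens_length_eq_ciNorm hS a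
  have hprod : (l.map fun x => g * x * g⁻¹).prod = g * l.prod * g⁻¹ :=
    (map_list_prod (MulAut.conj g) l).symm
  rw [← hlen, ← List.length_map (f := fun x : G => g * x * g⁻¹), ← hprod]
  exact ciNorm_prod_le_length _ fun x hx => by
    obtain ⟨y, hy, rfl⟩ := List.mem_map.mp hx
    exact conj_mem_conjGens g (hl y hy)

lemma ciNorm_conj_commutator_le (u a v : G) :
    ciNorm S (u * ⁅a, v⁆ * u⁻¹) ≤ 2 * ciNorm S v := by
  have hsplit : u * ⁅a, v⁆ * u⁻¹ = (u * a) * v * (u * a)⁻¹ * (u * v⁻¹ * u⁻¹) := by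
    rw [commutatorElement_def]; group
  calc ciNorm S (u * ⁅a, v⁆ * u⁻¹)
      ≤ ciNorm S ((u * a) * v * (u * a)⁻¹) + ciNorm S (u * v⁻¹ * u⁻¹) := by
        rw [hsplit]; exact ciNorm_mul_le hS _ _
    _ ≤ ciNorm S v + ciNorm S v⁻¹ := add_le_add (ciNorm_conj_le hS _ _) (ciNorm_conj_le hS _ _)
    _ ≤ 2 * ciNorm S v := by linarith [ciNorm_inv_le hS v]

lemma abs_le_ciNorm_mul {ψ : G → ℝ} (hψ : ∀ a b, ψ (a * b) = ψ a + ψ b) {K : ℝ}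
    (hK : ∀ s ∈ S, |ψ s| ≤ K) (g : G) : |ψ g| ≤ ciNorm S g * K := by
  have hone : ψ 1 = 0 := by simpa using hψ 1 1
  have hinv (a : G) : ψ a⁻¹ = -ψ a := by
    have := hψ a a⁻¹
    rw [mul_inv_cancel, hone] at this
    linarith
  have hgen : ∀ a ∈ conjGens S, |ψ a| ≤ K := by
    rintro _ ⟨c, s, hs, rfl⟩
    rw [hψ, hψ, hinv, add_neg_cancel_comm]
    rcases hs with hs | hs
    · exact hK s hs
    · simpa [hinv] using hK _ hs
  have hlist : ∀ l : List G, (∀ a ∈ l, a ∈ conjGens S) → |ψ l.prod| ≤ l.length * K := by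
    intro l hl
    induction l with
    | nil => simp [hone]
    | cons a l ih =>
      rw [List.prod_cons, hψ, List.length_cons, Nat.cast_succ]
      calc |ψ a + ψ l.prod| ≤ |ψ a| + |ψ l.prod| := abs_add_le _ _
        _ ≤ K + l.length * K :=
          add_le_add (hgen a (hl a List.mem_cons_self))
            (ih fun x hx => hl x (List.mem_cons_of_mem a hx))
        _ = (l.length + 1) * K := by ring
  obtain ⟨l, hl, rfl, hlen⟩ := exists_list_conjGens_length_eq_ciNorm hS g
  rw [← hlen]
  exact hlist l hl

end ConjugationInvariantNorm

lemma FreeGroup.normalClosure_range_of (α : Type*) :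
    Subgroup.normalClosure (Set.range (of : α → FreeGroup α)) = ⊤ :=
  top_le_iff.mp ((closure_range_of α).ge.trans Subgroup.closure_le_normalClosure)

lemma IsQuasiIsometricEmbedding.exists_abs_le_of_ciNorm_le {G G' : Type*} [Group G] [Group G']
    {S : Set G} {S' : Set G'} (hS : Subgroup.normalClosure S = ⊤) (hSfin : S.Finite)
    {ρ : G →* G'} (hρ : IsQuasiIsometricEmbedding (ciDist S) (ciDist S') ρ) {ψ : G → ℝ}
    (hψ : ∀ a b, ψ (a * b) = ψ a + ψ b) (B : ℝ) :
    ∃ M, ∀ x, (ciNorm S' (ρ x) : ℝ) ≤ B → |ψ x| ≤ M := by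
  obtain ⟨C, hC, D, -, hρ⟩ := hρ
  obtain ⟨K, hK⟩ := (hSfin.image fun s => |ψ s|).bddAbove
  refine ⟨C * (B + D) * max K 0, fun x hx => ?_⟩
  have hnorm : (ciNorm S x : ℝ) ≤ C * (B + D) := by
    have := (hρ x 1).1
    simp only [ciDist, mul_one, inv_one, map_one, one_div_mul_eq_div] at this
    exact (div_le_iff₀' hC).mp (by linarith)
  calc |ψ x| ≤ ciNorm S x * max K 0 :=
        abs_le_ciNorm_mul hS hψ (fun s hs => (hK ⟨s, hs, rfl⟩).trans (le_max_left K 0)) x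
    _ ≤ C * (B + D) * max K 0 := mul_le_mul_of_nonneg_right hnorm (le_max_right K 0)

lemma Equiv.Perm.exists_not_sameCycle_mul_pow {Q : Type*} [Finite Q] [Nontrivial Q]
    (σ τ : Equiv.Perm Q) (hσ : ∀ x y, σ.SameCycle x y) :
    ∃ c : ℕ, ∃ x y, ¬ (τ * σ ^ c).SameCycle x y := by
  obtain ⟨x, y, hxy⟩ := exists_pair_ne Q
  obtain ⟨c, hc⟩ := (hσ x (τ⁻¹ x)).exists_nat_pow_eq
  have hfix : Function.IsFixedPt (τ * σ ^ c) x := by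
    rw [Function.IsFixedPt, Equiv.Perm.mul_apply, hc, Equiv.Perm.coe_inv, Equiv.apply_symm_apply]
  exact ⟨c, x, y, fun h => hxy (h.eq_of_left hfix)⟩

section WeightCocycle

variable {ι Q : Type*} (ω : Q → ι → ℝ) (act : FreeGroup ι →* Equiv.Perm Q)

noncomputable def weightCocycleHom :
    FreeGroup ι →* (Q → Multiplicative ℝ) ⋊[mulAutArrow] Equiv.Perm Q :=
  FreeGroup.lift fun j => ⟨fun d => Multiplicative.ofAdd (ω d j), act (of j)⟩

/-- The signed `ω`-weight of the path in the Schreier graph that starts at `d` and reads `g` from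
the left, a letter `of j` leading from `x` to `(act (of j))⁻¹ x` along the edge `(x, j)`. -/
noncomputable def weightCocycle (g : FreeGroup ι) (d : Q) : ℝ :=
  ((weightCocycleHom ω act g).left d).toAdd

lemma weightCocycleHom_apply_right (g : FreeGroup ι) :
    (weightCocycleHom ω act g).right = act g := by
  change (SemidirectProduct.rightHom.comp (weightCocycleHom ω act)) g = act g
  congr 1
  exact FreeGroup.ext_hom _ _ fun j => by simp [weightCocycleHom]

lemma weightCocycle_mul (g h : FreeGroup ι) (d : Q) :
    weightCocycle ω act (g * h) d =
      weightCocycle ω act g d + weightCocycle ω act h ((act g)⁻¹ d) := by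
  simp only [weightCocycle, map_mul, SemidirectProduct.mul_left, weightCocycleHom_apply_right,
    Pi.mul_apply, mulAutArrow_apply_apply, toAdd_mul]
  rfl

lemma weightCocycle_of (j : ι) (d : Q) : weightCocycle ω act (of j) d = ω d j := by
  simp [weightCocycle, weightCocycleHom]

lemma weightCocycle_one (d : Q) : weightCocycle ω act 1 d = 0 := by
  simp [weightCocycle]

lemma weightCocycle_inv (g : FreeGroup ι) (d : Q) :
    weightCocycle ω act g⁻¹ d = -weightCocycle ω act g (act g d) := by
  have h := weightCocycle_mul ω act g g⁻¹ (act g d)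
  rw [mul_inv_cancel, weightCocycle_one, Equiv.Perm.coe_inv, Equiv.symm_apply_apply] at h
  linarith

lemma weightCocycle_mul_of_apply_eq {g : FreeGroup ι} {d : Q} (hg : act g d = d)
    (h : FreeGroup ι) :
    weightCocycle ω act (g * h) d = weightCocycle ω act g d + weightCocycle ω act h d := by
  rw [weightCocycle_mul, Equiv.Perm.inv_eq_iff_eq.mpr hg.symm]

lemma weightCocycle_pow (g : FreeGroup ι) (t : ℕ) (d : Q) :
    weightCocycle ω act (g ^ t) d =
      ∑ s ∈ Finset.range t, weightCocycle ω act g ((act g ^ s)⁻¹ d) := by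
  induction t with
  | zero => simp [weightCocycle_one]
  | succ t ih => rw [pow_succ, weightCocycle_mul, ih, Finset.sum_range_succ, map_pow]

section ActEqOne

variable {b : FreeGroup ι} (hb : act b = 1)
include hb

lemma weightCocycle_pow_of_act_eq_one (k : ℕ) (d : Q) :
    weightCocycle ω act (b ^ k) d = k * weightCocycle ω act b d := by
  simp [weightCocycle_pow, hb]

lemma weightCocycle_conj_of_act_eq_one (u : FreeGroup ι) (d : Q) :
    weightCocycle ω act (u * b * u⁻¹) d = weightCocycle ω act b ((act u)⁻¹ d) := by
  rw [weightCocycle_mul, weightCocycle_mul, weightCocycle_inv]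
  simp [hb]

lemma weightCocycle_commutator_of_act_eq_one (v : FreeGroup ι) (d : Q) :
    weightCocycle ω act ⁅b, v⁆ d =
      weightCocycle ω act b d - weightCocycle ω act b ((act v)⁻¹ d) := by
  rw [commutatorElement_def, mul_assoc, mul_assoc, weightCocycle_mul, ← mul_assoc,
    weightCocycle_conj_of_act_eq_one ω act (by simp [hb]), weightCocycle_inv]
  simp [hb, sub_eq_add_neg]

end ActEqOne

lemma exists_of_mul_of_pow_not_sameCycle [Finite Q] [Nontrivial Q] {i j : ι} (hij : i ≠ j) :
    ∃ i₀ i₁ : ι, i₀ ≠ i₁ ∧ ∃ c : ℕ, ∃ x y, ¬ (act (of i₀ * of i₁ ^ c)).SameCycle x y := by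
  by_cases hj : ∀ x y, (act (of j)).SameCycle x y
  · obtain ⟨c, x, y, h⟩ := (act (of j)).exists_not_sameCycle_mul_pow (act (of i)) hj
    exact ⟨i, j, hij, c, x, y, by rwa [map_mul, map_pow]⟩
  · obtain ⟨x, y, h⟩ : ∃ x y, ¬ (act (of j)).SameCycle x y := by simpa using hj
    exact ⟨j, i, hij.symm, 0, x, y, by rwa [pow_zero, mul_one]⟩

variable {act} in
lemma exists_act_eq_one_weightCocycle_lt [Finite Q] [Nontrivial Q] [Nontrivial ι] :
    ∃ (ω : Q → ι → ℝ) (b : FreeGroup ι) (d e : Q),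
      act b = 1 ∧ weightCocycle ω act b e < weightCocycle ω act b d := by
  classical
  obtain ⟨i, j, hij⟩ := exists_pair_ne ι
  obtain ⟨i₀, i₁, hi, c, e, d, hed⟩ := exists_of_mul_of_pow_not_sameCycle act hij
  set w := of i₀ * of i₁ ^ c
  -- `ω` only weighs the edge `(d, i₀)`, so `weightCocycle ω act (w ^ t) x` counts the visits
  -- of the `w`-orbit of `x` to `d`; the orbit of `e` never gets there.
  let ω : Q → ι → ℝ := fun x k => if x = d ∧ k = i₀ then 1 else 0
  have hw (x : Q) : weightCocycle ω act w x = if x = d then 1 else 0 := by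
    simp [w, ω, weightCocycle_mul, weightCocycle_pow, weightCocycle_of, hi.symm]
  have he (s : ℕ) : (act w ^ s)⁻¹ e ≠ d := fun hs =>
    hed ⟨-(s : ℤ), by rwa [zpow_neg, zpow_natCast]⟩
  refine ⟨ω, w ^ orderOf (act w), d, e, by rw [map_pow, pow_orderOf_eq_one], ?_⟩
  simp only [weightCocycle_pow, hw]
  rw [Finset.sum_eq_zero fun s _ => if_neg (he s)]
  exact Finset.sum_pos' (fun s _ => by positivity)
    ⟨0, Finset.mem_range.mpr (orderOf_pos (act w)), by simp⟩

end WeightCocycle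

theorem Subgroup.exists_additive_unbounded_on_ciNorm_ball {ι : Type*} [Nontrivial ι]
    {S : Set (FreeGroup ι)} (hS : Subgroup.normalClosure S = ⊤) (H : Subgroup (FreeGroup ι))
    [H.FiniteIndex] (hH : H ≠ ⊤) :
    ∃ ψ : FreeGroup ι → ℝ, (∀ a ∈ H, ∀ b, ψ (a * b) = ψ a + ψ b) ∧
      ∃ B : ℝ, ∀ M : ℝ, ∃ h ∈ H, (ciNorm S h : ℝ) ≤ B ∧ M < ψ h := by
  let Q := FreeGroup ι ⧸ H
  have : Nontrivial Q := Finite.one_lt_card_iff_nontrivial.mp (H.one_lt_index_of_ne_top hH)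
  let act := MulAction.toPermHom (FreeGroup ι) Q
  obtain ⟨ω, b, d, e, hb, hlt⟩ := exists_act_eq_one_weightCocycle_lt (act := act)
  let c₀ : Q := ((1 : FreeGroup ι) : Q)
  have hmem (g : FreeGroup ι) : g ∈ H ↔ act g c₀ = c₀ := by
    rw [← MulAction.stabilizer_quotient H]; rfl
  obtain ⟨u, hu⟩ := MulAction.exists_smul_eq (FreeGroup ι) d c₀
  obtain ⟨v, hv⟩ := MulAction.exists_smul_eq (FreeGroup ι) e d
  refine ⟨fun g => weightCocycle ω act g c₀,
    fun a ha => weightCocycle_mul_of_apply_eq ω act ((hmem a).mp ha), 2 * ciNorm S v, fun M => ?_⟩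
  obtain ⟨k, hk⟩ := exists_nat_gt (M / (weightCocycle ω act b d - weightCocycle ω act b e))
  have hbk : act (b ^ k) = 1 := by rw [map_pow, hb, one_pow]
  have hcomm : act ⁅b ^ k, v⁆ = 1 := by
    rw [map_commutatorElement, hbk, commutatorElement_one_left]
  refine ⟨u * ⁅b ^ k, v⁆ * u⁻¹, (hmem _).mpr (by simp [hcomm]), ?_, ?_⟩
  · exact_mod_cast ciNorm_conj_commutator_le hS u _ v
  · show M < weightCocycle ω act (u * ⁅b ^ k, v⁆ * u⁻¹) c₀
    rw [weightCocycle_conj_of_act_eq_one ω act hcomm,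
      weightCocycle_commutator_of_act_eq_one ω act hbk, weightCocycle_pow_of_act_eq_one ω act hb,
      weightCocycle_pow_of_act_eq_one ω act hb, Equiv.Perm.inv_eq_iff_eq.mpr hu.symm,
      Equiv.Perm.inv_eq_iff_eq.mpr hv.symm, ← mul_sub]
    exact (div_lt_iff₀ (sub_pos.mpr hlt)).mp hk

theorem not_quasiIsometricEmbedding_of_properFiniteIndex_general (m n : ℕ)
    (hn : 2 ≤ n)
    (ρ : FreeGroup (Fin m) →* FreeGroup (Fin n))
    (hproper : ρ.range ≠ ⊤) (hfin : ρ.range.index ≠ 0) :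
    ¬ IsQuasiIsometricEmbedding (freeDist m) (freeDist n) ρ := by
  intro hρ
  have : Nontrivial (Fin n) := Fin.nontrivial_iff_two_le.mpr hn
  have : ρ.range.FiniteIndex := ⟨hfin⟩
  obtain ⟨ψ, hψ, B, hunbdd⟩ :=
    ρ.range.exists_additive_unbounded_on_ciNorm_ball (FreeGroup.normalClosure_range_of _) hproper
  obtain ⟨M, hM⟩ := hρ.exists_abs_le_of_ciNorm_le (FreeGroup.normalClosure_range_of _)
    (Set.finite_range _) (ψ := fun x => ψ (ρ x))
    (fun x y => by rw [map_mul]; exact hψ _ ⟨x, rfl⟩ _) B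
  obtain ⟨_, ⟨x, rfl⟩, hxB, hMx⟩ := hunbdd M
  exact (hMx.trans_le (le_abs_self _)).not_ge (hM x hxB)

/-- A homomorphism `F_m → F_n` (`m ≥ 1`, `n ≥ 2`) whose image is a proper subgroup
of finite index is not a quasi-isometric embedding for the bi-invariant word metrics. -/
theorem not_quasiIsometricEmbedding_of_properFiniteIndex (m n : ℕ)
    (hm : 1 ≤ m) (hn : 2 ≤ n)
    (ρ : FreeGroup (Fin m) →* FreeGroup (Fin n))
    (hproper : ρ.range ≠ ⊤) (hfin : ρ.range.index ≠ 0) :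
    ¬ IsQuasiIsometricEmbedding (freeDist m) (freeDist n) ρ :=
  not_quasiIsometricEmbedding_of_properFiniteIndex_general m n hn ρ hproper hfin
end

section
/- Every nontrivial normal subgroup N of the free group F_n is unbounded with respect to the bi-invariant word metric associated with the standard generating set; more precisely, N contains a nontrivial cyclically reduced element w, and ‖w^k‖ → ∞ as k → ∞. -/
/-- A nontrivial element of a free group is cyclically reduced if the first letter
of its reduced word is not the inverse of the last letter. -/
def CyclicallyReduced {α : Type*} [DecidableEq α] (w : FreeGroup α) : Prop :=
  w ≠ 1 ∧ ∀ x ∈ w.toWord.head?, ∀ y ∈ w.toWord.getLast?, x ≠ (y.1, !y.2)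


/-!
The proof uses Brooks' counting quasimorphism. For a nonempty reduced word `u`, let `φ_u g` be the
number of occurrences of `u` in the reduced word of `g` minus the number of occurrences of `u⁻¹`.
The reduced words of `g`, `h` and `g * h` have the form `A C`, `C⁻¹ B` and `A B`, and only windows
straddling a junction are miscounted, so `φ_u` is a quasimorphism of defect `3 |u|`. It is bounded
by `1` on the generators, hence by `1 + 12 |u|` times the conjugation-invariant norm.

A nontrivial normal subgroup contains a cyclically reduced `w`; with `u` the reduced word of `w`,
the reduced word of `w ^ k` is `u ^ k`, which contains `u` at least `k` times and never contains
`u⁻¹`: a window of length `|u|` in `u ^ k` is a rotation `q p` of `u = p q`, and `q p = q⁻¹ p⁻¹`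
would make the reduced words `p` and `q` equal to their own inverses, forcing them to be empty.
So `φ_u (w ^ k) ≥ k` and `‖w ^ k‖ ≥ k / (1 + 12 |u|)`.
-/

namespace List

variable {β : Type*}

theorem infix_append_self_of_infix_flatten_replicate {u v : List β} {k : ℕ}
    (hv : v <:+: (replicate k u).flatten) (hlen : v.length ≤ u.length) : v <:+: u ++ u := by
  induction k with
  | zero => simp_all
  | succ k ih =>
    rw [replicate_succ, flatten_cons, infix_append_iff] at hv
    rcases hv with hv | hv | ⟨l₁, l₂, rfl, h₁, h₂⟩
    · exact infix_append_of_infix_left hv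
    · exact ih hv
    · have hpre : (replicate k u).flatten <+: u ++ (replicate k u).flatten := by
        rw [← flatten_cons, ← replicate_succ, replicate_succ', flatten_append]
        exact prefix_append _ _
      have h₂' : l₂ <+: u :=
        prefix_of_prefix_length_le (h₂.trans hpre) (prefix_append _ _)
          (by simp only [length_append] at hlen; omega)
      exact infix_append_iff.mpr (Or.inr (Or.inr ⟨l₁, l₂, rfl, h₁, h₂'⟩))

theorem exists_rotation_of_infix_append_self {u v : List β} (hv : v <:+: u ++ u)
    (hlen : v.length = u.length) : ∃ p q, u = p ++ q ∧ v = q ++ p := by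
  rcases infix_append_iff.mp hv with hv | hv | ⟨l₁, l₂, rfl, h₁, ⟨t, rfl⟩⟩
  · exact ⟨[], u, rfl, by simpa using hv.eq_of_length hlen⟩
  · exact ⟨[], u, rfl, by simpa using hv.eq_of_length hlen⟩
  · refine ⟨l₂, t, rfl, ?_⟩
    simp only [length_append] at hlen
    rw [suffix_iff_eq_drop.mp h₁]
    simp [show l₂.length + t.length - l₁.length = l₂.length by omega]

theorem add_length_le_of_prefix_drop {u v : List β} {i : ℕ} (h : u <+: v.drop i)
    (hi : i < v.length) : i + u.length ≤ v.length := by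
  have := h.length_le
  simp only [length_drop] at this
  omega

theorem prefix_drop_append {A B : List β} {i : ℕ} : A.drop i <+: (A ++ B).drop i := by
  rw [drop_append]
  exact prefix_append _ _

theorem prefix_drop_reverse_iff {u v : List β} {i : ℕ} (h : i + u.length ≤ v.length) :
    u <+: v.reverse.drop i ↔ u.reverse <+: v.drop (v.length - u.length - i) := by
  rw [drop_reverse, ← reverse_suffix, reverse_reverse, suffix_iff_eq_drop, prefix_iff_eq_take,
    drop_take, length_take, length_reverse, min_eq_left (by omega),
    show v.length - i - u.length = v.length - u.length - i by omega,
    show v.length - i - (v.length - u.length - i) = u.length by omega]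

section InfixCount

variable [DecidableEq β]

def infixCount (u v : List β) : ℕ :=
  ((Finset.range v.length).filter fun i => u <+: v.drop i).card

theorem infixCount_le_length (u v : List β) : infixCount u v ≤ v.length :=
  (Finset.card_filter_le _ _).trans (Finset.card_range _).le

theorem infixCount_eq_zero_of_not_infix {u v : List β} (h : ¬u <:+: v) : infixCount u v = 0 :=
  Finset.card_eq_zero.mpr <| Finset.filter_eq_empty_iff.mpr fun i _ hi =>
    h (hi.isInfix.trans (drop_suffix i v).isInfix)

theorem infixCount_append_eq (u A B : List β) :
    infixCount u (A ++ B) =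
      ((Finset.range A.length).filter fun i => u <+: (A ++ B).drop i).card + infixCount u B := by
  simp only [infixCount, Finset.card_filter, length_append, Finset.sum_range_add,
    drop_length_add_append]

theorem infixCount_add_infixCount_le_infixCount_append (u A B : List β) :
    infixCount u A + infixCount u B ≤ infixCount u (A ++ B) := by
  rw [infixCount_append_eq]
  gcongr
  exact Finset.card_le_card <|
    Finset.monotone_filter_right _ fun _ _ h => h.trans prefix_drop_append

theorem infixCount_append_le (u A B : List β) :
    infixCount u (A ++ B) ≤ infixCount u A + infixCount u B + u.length := by
  rw [infixCount_append_eq, add_right_comm]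
  gcongr
  calc _ ≤ ((Finset.range A.length).filter (fun i => u <+: A.drop i) ∪
          Finset.Ico (A.length - u.length) A.length).card := by
        refine Finset.card_le_card fun i hi => ?_
        simp only [Finset.mem_filter, Finset.mem_range, Finset.mem_union, Finset.mem_Ico] at hi ⊢
        by_cases hfit : i + u.length ≤ A.length
        · exact Or.inl ⟨hi.1, prefix_of_prefix_length_le hi.2 prefix_drop_append
            (by rw [length_drop]; omega)⟩
        · omega
    _ ≤ infixCount u A + (Finset.Ico (A.length - u.length) A.length).card :=
        Finset.card_union_le _ _
    _ ≤ infixCount u A + u.length := by rw [Nat.card_Ico]; omega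

theorem one_le_infixCount_self {u : List β} (hu : u ≠ []) : 1 ≤ infixCount u u :=
  Finset.card_pos.mpr ⟨0, by simpa using length_pos_iff.mpr hu⟩

theorem le_infixCount_flatten_replicate {u : List β} (hu : u ≠ []) (k : ℕ) :
    k ≤ infixCount u (replicate k u).flatten := by
  induction k with
  | zero => simp
  | succ k ih =>
    rw [replicate_succ, flatten_cons]
    have hsplit := infixCount_add_infixCount_le_infixCount_append u u (replicate k u).flatten
    have hself := one_le_infixCount_self hu
    omega

theorem infixCount_reverse {u : List β} (hu : u ≠ []) (v : List β) :
    infixCount u v.reverse = infixCount u.reverse v := by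
  have hu : 0 < u.length := length_pos_iff.mpr hu
  refine Finset.card_bij' (fun i _ => v.length - u.length - i) (fun i _ => v.length - u.length - i)
    ?_ ?_ ?_ ?_ <;> simp only [Finset.mem_filter, Finset.mem_range, length_reverse]
  · rintro i ⟨hi, h⟩
    have := add_length_le_of_prefix_drop h (by simpa using hi)
    simp only [length_reverse] at this
    exact ⟨by omega, (prefix_drop_reverse_iff this).mp h⟩
  · rintro i ⟨hi, h⟩
    have := add_length_le_of_prefix_drop h hi
    simp only [length_reverse] at this
    refine ⟨by omega, (prefix_drop_reverse_iff (by omega)).mpr ?_⟩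
    rwa [show v.length - u.length - (v.length - u.length - i) = i by omega]
  all_goals
    rintro i ⟨hi, h⟩
    have := add_length_le_of_prefix_drop h (by simpa using hi)
    simp only [length_reverse] at this
    omega

theorem infixCount_map {γ : Type*} [DecidableEq γ] {f : β → γ} (hf : Function.Injective f)
    (u v : List β) : infixCount (u.map f) (v.map f) = infixCount u v := by
  simp [infixCount, ← map_drop, prefix_map_iff_of_injective hf]

end InfixCount

end List

section Quasimorphism

variable {G : Type*} [Group G]

def IsQuasimorphism (f : G → ℤ) (D : ℤ) : Prop :=
  ∀ g h, |f (g * h) - f g - f h| ≤ D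

theorem exists_list_length_eq_ciNorm {S : Set G} {g : G}
    (hg : ∃ l : List G, (∀ x ∈ l, x ∈ conjGens S) ∧ l.prod = g) :
    ∃ l : List G, l.length = ciNorm S g ∧ (∀ x ∈ l, x ∈ conjGens S) ∧ l.prod = g := by
  obtain ⟨l, hl, hprod⟩ := hg
  obtain ⟨f, hf, hfprod⟩ := Nat.sInf_mem (s := {k | ∃ f : Fin k → G,
      (∀ i, f i ∈ conjGens S) ∧ (List.ofFn f).prod = g})
    ⟨l.length, l.get, fun i => hl _ (l.get_mem i), by rw [List.ofFn_get, hprod]⟩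
  exact ⟨List.ofFn f, List.length_ofFn, by simpa [List.mem_ofFn] using hf, hfprod⟩

namespace IsQuasimorphism

variable {f : G → ℤ} {D : ℤ}

theorem abs_conj_le (hf : IsQuasimorphism f D) (h1 : f 1 = 0) (g s : G) :
    |f (g * s * g⁻¹)| ≤ |f s| + 3 * D := by
  have e₁ := abs_le.mp (hf (g * s) g⁻¹)
  have e₂ := abs_le.mp (hf g s)
  have e₃ := abs_le.mp (hf g g⁻¹)
  rw [mul_inv_cancel, h1] at e₃
  rw [abs_le]
  constructor <;> linarith [neg_abs_le (f s), le_abs_self (f s)]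

theorem abs_list_prod_le (hf : IsQuasimorphism f D) (h1 : f 1 = 0) {B : ℤ} (l : List G)
    (hl : ∀ x ∈ l, |f x| ≤ B) : |f l.prod| ≤ l.length * (B + D) := by
  induction l with
  | nil => simp [h1]
  | cons x l ih =>
    rw [List.prod_cons, List.length_cons, Nat.cast_succ]
    have hx := hl x List.mem_cons_self
    have hl := ih fun y hy => hl y (List.mem_cons_of_mem x hy)
    have hxl := hf x l.prod
    rw [abs_le] at hx hl hxl ⊢
    constructor <;> linarith

theorem abs_le_ciNorm_mul (hf : IsQuasimorphism f D) (h1 : f 1 = 0) {S : Set G} {B : ℤ}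
    (hS : ∀ s, s ∈ S ∨ s⁻¹ ∈ S → |f s| ≤ B) {g : G}
    (hg : ∃ l : List G, (∀ x ∈ l, x ∈ conjGens S) ∧ l.prod = g) :
    |f g| ≤ ciNorm S g * (B + 4 * D) := by
  obtain ⟨l, hlen, hl, rfl⟩ := exists_list_length_eq_ciNorm hg
  rw [← hlen, show B + 4 * D = (B + 3 * D) + D by ring]
  refine hf.abs_list_prod_le h1 l fun x hx => ?_
  obtain ⟨c, s, hs, rfl⟩ := hl x hx
  exact (hf.abs_conj_le h1 c s).trans (by linarith [hS s hs])

end IsQuasimorphism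

end Quasimorphism

namespace FreeGroup

variable {α : Type*}

theorem exists_list_conjGens_prod_eq (g : FreeGroup α) :
    ∃ l : List (FreeGroup α), (∀ x ∈ l, x ∈ conjGens (Set.range of)) ∧ l.prod = g := by
  induction g using FreeGroup.induction_on with
  | C1 => exact ⟨[], by simp, rfl⟩
  | of a => exact ⟨[of a], by simpa using ⟨1, of a, Or.inl ⟨a, rfl⟩, by group⟩, by simp⟩
  | inv_of a _ =>
    exact ⟨[(of a)⁻¹], by simpa using ⟨1, (of a)⁻¹, Or.inr ⟨a, by simp⟩, by group⟩, by simp⟩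
  | mul x y hx hy =>
    obtain ⟨l₁, hl₁, rfl⟩ := hx
    obtain ⟨l₂, hl₂, rfl⟩ := hy
    exact ⟨l₁ ++ l₂, by simpa using fun x hx => hx.elim (hl₁ x) (hl₂ x), List.prod_append⟩

theorem ne_mk_fst_not_snd_iff {a b : α × Bool} : a ≠ (b.1, !b.2) ↔ (b.1 = a.1 → b.2 = a.2) := by
  obtain ⟨_, _ | _⟩ := a <;> obtain ⟨_, _ | _⟩ := b <;> simp [eq_comm]

theorem IsReduced.eq_nil_of_invRev_eq {L : List (α × Bool)} (hL : IsReduced L)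
    (h : invRev L = L) : L = [] := by
  induction L using List.bidirectionalRec with
  | nil => rfl
  | singleton a => simp [invRev, Prod.ext_iff] at h
  | cons_append a M b ih =>
    obtain ⟨hba, hM, -⟩ : (b.1, !b.2) = a ∧ invRev M = M ∧ _ := by
      simpa [invRev_append, invRev_cons, invRev] using h
    obtain rfl : M = [] := ih (hL.infix ⟨[a], [b], rfl⟩) hM
    simp [← hba, IsReduced] at hL

theorem IsReduced.not_invRev_infix_flatten_replicate {u : List (α × Bool)} (hu : IsReduced u)
    (hne : u ≠ []) (k : ℕ) : ¬invRev u <:+: (List.replicate k u).flatten := by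
  intro h
  obtain ⟨p, q, rfl, hpq⟩ := List.exists_rotation_of_infix_append_self
    (List.infix_append_self_of_infix_flatten_replicate h invRev_length.le) invRev_length
  rw [invRev_append] at hpq
  obtain ⟨hq, hp⟩ := List.append_inj hpq invRev_length
  have hp := (hu.infix ⟨[], q, rfl⟩).eq_nil_of_invRev_eq hp
  have hq := (hu.infix ⟨p, [], by simp⟩).eq_nil_of_invRev_eq hq
  simp [hp, hq] at hne

variable [DecidableEq α]

theorem IsReduced.exists_reduce_append_eq {P Q : List (α × Bool)}
    (hP : IsReduced P) (hQ : IsReduced Q) :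
    ∃ A C B, P = A ++ C ∧ Q = invRev C ++ B ∧ reduce (P ++ Q) = A ++ B := by
  induction P using List.reverseRecOn generalizing Q with
  | nil => exact ⟨[], [], Q, rfl, rfl, hQ.reduce_eq⟩
  | append_singleton P p ih =>
    rcases Q with _ | ⟨q, Q⟩
    · exact ⟨P ++ [p], [], [], by simp, rfl, by simpa using hP.reduce_eq⟩
    by_cases hpq : q = (p.1, !p.2)
    · obtain ⟨A, C, B, rfl, rfl, hAB⟩ :=
        ih (Q := Q) (hP.infix ⟨[], [p], rfl⟩) (hQ.infix ⟨[q], [], by simp⟩)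
      refine ⟨A, C ++ [p], B, by simp, by simp [hpq, invRev], ?_⟩
      rw [← hAB, hpq]
      apply reduce.Step.eq
      simpa using (Red.Step.not : Red.Step (A ++ C ++ (p.1, p.2) :: (p.1, !p.2) :: _) _)
    · have hred : IsReduced (P ++ [p] ++ q :: Q) :=
        hP.append_overlap (isReduced_cons_cons.mpr ⟨ne_mk_fst_not_snd_iff.mp hpq, hQ⟩)
          (List.cons_ne_nil _ _)
      exact ⟨P ++ [p], [], q :: Q, by simp, rfl, by simpa using hred.reduce_eq⟩

theorem exists_toWord_mul_eq (g h : FreeGroup α) :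
    ∃ A C B, g.toWord = A ++ C ∧ h.toWord = invRev C ++ B ∧ (g * h).toWord = A ++ B := by
  rw [toWord_mul]
  exact isReduced_toWord.exists_reduce_append_eq isReduced_toWord

theorem cyclicallyReduced_iff {w : FreeGroup α} :
    CyclicallyReduced w ↔ w ≠ 1 ∧ IsCyclicallyReduced w.toWord := by
  simp only [CyclicallyReduced, isCyclicallyReduced_iff, isReduced_toWord, true_and,
    ne_mk_fst_not_snd_iff]
  exact and_congr_right fun _ => forall₂_comm

theorem toWord_pow_of_isCyclicallyReduced {w : FreeGroup α} (hw : IsCyclicallyReduced w.toWord)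
    (k : ℕ) : (w ^ k).toWord = (List.replicate k w.toWord).flatten := by
  rw [toWord_pow, (hw.flatten_replicate k).isReduced.reduce_eq]

open reduceCyclically in
theorem exists_cyclicallyReduced_conj {u : FreeGroup α} (hu : u ≠ 1) :
    ∃ c, CyclicallyReduced (c * u * c⁻¹) := by
  have hsplit := conj_conjugator_reduceCyclically u.toWord
  set C := conjugator u.toWord
  set R := reduceCyclically u.toWord
  have hR : IsReduced R := isReduced_toWord.infix ⟨C, _, hsplit⟩
  have hu' : u = mk C * mk R * (mk C)⁻¹ := by
    rw [← mk_toWord (x := u), ← hsplit, ← mul_mk, ← mul_mk, ← inv_mk]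
  refine ⟨(mk C)⁻¹, ?_⟩
  have hconj : (mk C)⁻¹ * u * (mk C)⁻¹⁻¹ = mk R := by rw [hu']; group
  rw [hconj, cyclicallyReduced_iff, toWord_mk, hR.reduce_eq]
  refine ⟨fun h1 => hu ?_, isCyclicallyReduced isReduced_toWord⟩
  rw [hu', h1]
  group

theorem infixCount_invRev {u : List (α × Bool)} (hu : u ≠ []) (v : List (α × Bool)) :
    List.infixCount u (invRev v) = List.infixCount (invRev u) v := by
  have hinv : Function.Involutive fun a : α × Bool => (a.1, !a.2) := fun a => by simp
  rw [invRev, List.infixCount_reverse hu, invRev, ← List.map_reverse,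
    ← List.infixCount_map hinv.injective (List.map _ u.reverse), List.map_map, hinv.comp_self,
    List.map_id]

open List (infixCount)

def brooksCount (u v : List (α × Bool)) : ℤ :=
  infixCount u v - infixCount (invRev u) v

theorem abs_brooksCount_append_sub_le (u A B : List (α × Bool)) :
    |brooksCount u (A ++ B) - brooksCount u A - brooksCount u B| ≤ u.length := by
  have h₁ := List.infixCount_add_infixCount_le_infixCount_append u A B
  have h₂ := List.infixCount_append_le u A B
  have h₃ := List.infixCount_add_infixCount_le_infixCount_append (invRev u) A B
  have h₄ := List.infixCount_append_le (invRev u) A B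
  rw [invRev_length] at h₄
  rw [brooksCount, brooksCount, brooksCount, abs_le]
  constructor <;> omega

theorem brooksCount_invRev {u : List (α × Bool)} (hu : u ≠ []) (v : List (α × Bool)) :
    brooksCount u (invRev v) = -brooksCount u v := by
  have hu' : invRev u ≠ [] := by simpa [← List.length_pos_iff, invRev_length] using hu
  rw [brooksCount, brooksCount, infixCount_invRev hu, infixCount_invRev hu', invRev_invRev]
  ring

def brooksQuasimorphism (u : List (α × Bool)) (g : FreeGroup α) : ℤ :=
  brooksCount u g.toWord

variable {u : List (α × Bool)}

theorem brooksQuasimorphism_one : brooksQuasimorphism u 1 = 0 := by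
  simp [brooksQuasimorphism, brooksCount, List.infixCount]

theorem isQuasimorphism_brooksQuasimorphism (hu : u ≠ []) :
    IsQuasimorphism (brooksQuasimorphism u) (3 * u.length) := by
  intro g h
  obtain ⟨A, C, B, hg, hh, hgh⟩ := exists_toWord_mul_eq g h
  have e₁ := abs_le.mp (abs_brooksCount_append_sub_le u A B)
  have e₂ := abs_le.mp (abs_brooksCount_append_sub_le u A C)
  have e₃ := abs_le.mp (abs_brooksCount_append_sub_le u (invRev C) B)
  rw [brooksCount_invRev hu] at e₃
  simp only [brooksQuasimorphism, hg, hh, hgh, abs_le]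
  constructor <;> linarith

theorem abs_brooksQuasimorphism_le_one {s : FreeGroup α} (hs : s.toWord.length = 1) :
    |brooksQuasimorphism u s| ≤ 1 := by
  have h₁ := List.infixCount_le_length u s.toWord
  have h₂ := List.infixCount_le_length (invRev u) s.toWord
  rw [brooksQuasimorphism, brooksCount, abs_le]
  constructor <;> omega

theorem le_brooksQuasimorphism_pow {w : FreeGroup α} (hw : CyclicallyReduced w) (k : ℕ) :
    k ≤ brooksQuasimorphism w.toWord (w ^ k) := by
  obtain ⟨hw1, hcyc⟩ := cyclicallyReduced_iff.mp hw
  have hne : w.toWord ≠ [] := by simpa using hw1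
  have hinv := List.infixCount_eq_zero_of_not_infix
    (isReduced_toWord.not_invRev_infix_flatten_replicate hne k)
  simp only [brooksQuasimorphism, brooksCount, toWord_pow_of_isCyclicallyReduced hcyc, hinv,
    Nat.cast_zero, sub_zero, Nat.cast_le]
  exact List.le_infixCount_flatten_replicate hne k

theorem le_ciNorm_pow_mul {w : FreeGroup α} (hw : CyclicallyReduced w) (k : ℕ) :
    k ≤ ciNorm (Set.range of) (w ^ k) * (1 + 12 * w.toWord.length) := by
  have hne : w.toWord ≠ [] := by simpa using (cyclicallyReduced_iff.mp hw).1
  have hS : ∀ s : FreeGroup α, s ∈ Set.range of ∨ s⁻¹ ∈ Set.range of →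
      |brooksQuasimorphism w.toWord s| ≤ 1 := by
    rintro s (⟨a, rfl⟩ | ⟨a, hs⟩)
    · exact abs_brooksQuasimorphism_le_one rfl
    · rw [← inv_inv s, ← hs]
      exact abs_brooksQuasimorphism_le_one (by simp [invRev_length])
  have hupper := (isQuasimorphism_brooksQuasimorphism hne).abs_le_ciNorm_mul
    brooksQuasimorphism_one hS (exists_list_conjGens_prod_eq (w ^ k))
  have hlower := le_brooksQuasimorphism_pow hw k
  zify
  linarith [le_abs_self (brooksQuasimorphism w.toWord (w ^ k))]

theorem tendsto_ciNorm_pow {w : FreeGroup α} (hw : CyclicallyReduced w) :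
    Filter.Tendsto (fun k : ℕ => (ciNorm (Set.range of) (w ^ k) : ℝ))
      Filter.atTop Filter.atTop := by
  refine tendsto_natCast_atTop_atTop.comp <| Filter.tendsto_atTop_atTop.mpr fun b =>
    ⟨b * (1 + 12 * w.toWord.length), fun k hk => ?_⟩
  exact Nat.le_of_mul_le_mul_right (hk.trans (le_ciNorm_pow_mul hw k)) (by omega)

end FreeGroup

/-- Every nontrivial normal subgroup `N` of `F_n` is unbounded for the bi-invariant
word metric: it contains a nontrivial cyclically reduced element `w` with
`‖wᵏ‖ → ∞`. -/
theorem normal_subgroup_unbounded (n : ℕ) (N : Subgroup (FreeGroup (Fin n)))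
    [N.Normal] (hN : N ≠ ⊥) :
    (¬ ∃ B : ℝ, ∀ x ∈ N, ∀ y ∈ N, freeDist n x y ≤ B) ∧
    ∃ w ∈ N, CyclicallyReduced w ∧
      Filter.Tendsto
        (fun k : ℕ =>
          ((ciNorm (Set.range (FreeGroup.of : Fin n → FreeGroup (Fin n))) (w ^ k) : ℝ)))
        Filter.atTop Filter.atTop := by
  obtain ⟨u, huN, hu⟩ := (Subgroup.bot_or_exists_ne_one N).resolve_left hN
  obtain ⟨c, hw⟩ := FreeGroup.exists_cyclicallyReduced_conj hu
  have hwN : c * u * c⁻¹ ∈ N := ‹N.Normal›.conj_mem u huN c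
  have htend := FreeGroup.tendsto_ciNorm_pow hw
  refine ⟨fun ⟨B, hB⟩ => ?_, _, hwN, hw, htend⟩
  obtain ⟨k, hk⟩ := (htend.eventually_gt_atTop B).exists
  have hdist := hB _ (pow_mem hwN k) 1 (one_mem N)
  rw [freeDist, ciDist, inv_one, mul_one] at hdist
  exact hdist.not_gt hk
end

section
/- Let ℤ/2 * ℤ/2 be the infinite dihedral group, the free product of two cyclic groups of order 2 with generators ā and b̄, equipped with the conjugation-invariant word norm ‖·‖_T associated with T = {ā, b̄}. Then the diameter of ℤ/2 * ℤ/2 with respect to the associated bi-invariant metric equals 2; equivalently, every nontrivial element is a product of at most 2 conjugates of ā and b̄, and some element is not a single conjugate of ā or b̄. -/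
/-- The infinite dihedral group `ℤ/2 * ℤ/2`, the free product of two cyclic groups of order 2. -/
abbrev InfDihedral : Type := Monoid.CoprodI (fun _ : Fin 2 => Multiplicative (ZMod 2))

/-- The canonical surjection `F₂ = ⟨a, b⟩ → ℤ/2 * ℤ/2` sending the free generators
to the two generators of order 2. -/
noncomputable def piMap : FreeGroup (Fin 2) →* InfDihedral :=
  FreeGroup.lift (fun i : Fin 2 =>
    Monoid.CoprodI.of (M := fun _ : Fin 2 => Multiplicative (ZMod 2)) (i := i)
      (Multiplicative.ofAdd (1 : ZMod 2)))

/-! Write `a, b` for the generators and `t = a b`. Every element is a rotation `t ^ i` or a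
reflection `a t ^ i`. Since `t ^ (-m) a t ^ m = a t ^ (2m)` and `t ^ (-m) b t ^ m = a t ^ (2m+1)`,
every reflection is a single conjugate of `a` or `b`, and every rotation `t ^ i = a · (a t ^ i)` is
a product of two. For the lower bound, the abelianization map to `(ℤ/2)²` counting `a`'s and `b`'s
mod 2 is constant on conjugacy classes and sends conjugates of `a`, `b` to `(1,0)`, `(0,1)` but
`t` to `(1,1)`, so `t` is neither trivial nor a single conjugate. -/

section ConjugationInvariantNorm

variable {G : Type*} [Group G] {S : Set G}

lemma mem_conjGens_of_mem {s : G} (hs : s ∈ S) : s ∈ conjGens S :=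
  ⟨1, s, Or.inl hs, by group⟩

lemma ciNorm_le_of_prod_eq {k : ℕ} (f : Fin k → G) (hf : ∀ i, f i ∈ conjGens S) {g : G}
    (hg : (List.ofFn f).prod = g) : ciNorm S g ≤ k :=
  Nat.sInf_le ⟨f, hf, hg⟩

lemma ciNorm_le_one {x : G} (hx : x ∈ conjGens S) : ciNorm S x ≤ 1 :=
  ciNorm_le_of_prod_eq ![x] (by simpa using hx) (by simp)

lemma ciNorm_mul_le_two {x y : G} (hx : x ∈ conjGens S) (hy : y ∈ conjGens S) :
    ciNorm S (x * y) ≤ 2 :=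
  ciNorm_le_of_prod_eq ![x, y] (by simp [Fin.forall_fin_two, hx, hy]) (by simp)

lemma ciNorm_mul_eq_two {x y : G} (hx : x ∈ conjGens S) (hy : y ∈ conjGens S)
    (hne : x * y ≠ 1) (hnmem : x * y ∉ conjGens S) : ciNorm S (x * y) = 2 := by
  refine le_antisymm (ciNorm_mul_le_two hx hy) (le_csInf ⟨2, ![x, y], ?_, by simp⟩ ?_)
  · simp [Fin.forall_fin_two, hx, hy]
  rintro (_ | _ | k) ⟨f, hf, hprod⟩
  · exact absurd (by simpa using hprod.symm) hne
  · have h0 : f 0 = x * y := by simpa using hprod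
    exact absurd (h0 ▸ hf 0) hnmem
  · omega

lemma exists_map_eq_of_mem_conjGens {A : Type*} [CommGroup A] (φ : G →* A) {x : G}
    (hx : x ∈ conjGens S) : ∃ s ∈ S, φ x = φ s ∨ φ x = (φ s)⁻¹ := by
  obtain ⟨g, s, hs | hs, rfl⟩ := hx
  · exact ⟨s, hs, Or.inl (by simp [mul_comm (φ g)])⟩
  · exact ⟨s⁻¹, hs, Or.inr (by simp [mul_comm (φ g)])⟩

end ConjugationInvariantNorm

namespace InfDihedral

open Monoid

noncomputable def gen (i : Fin 2) : InfDihedral :=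
  CoprodI.of (M := fun _ : Fin 2 => Multiplicative (ZMod 2)) (i := i) (Multiplicative.ofAdd 1)

lemma gen_mul_self (i : Fin 2) : gen i * gen i = 1 := by
  rw [gen, ← map_mul, ← ofAdd_add]
  exact map_one _

lemma gen_inv (i : Fin 2) : (gen i)⁻¹ = gen i :=
  inv_eq_of_mul_eq_one_right (gen_mul_self i)

abbrev generators : Set InfDihedral := {gen 0, gen 1}

lemma gen_mem_conjGens (i : Fin 2) : gen i ∈ conjGens generators :=
  mem_conjGens_of_mem (by fin_cases i <;> simp)

noncomputable def rot : InfDihedral := gen 0 * gen 1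

lemma rot_inv : rot⁻¹ = gen 1 * gen 0 := by
  rw [rot, mul_inv_rev, gen_inv, gen_inv]

lemma gen_zero_mul_rot : gen 0 * rot = gen 1 := by
  rw [rot, ← mul_assoc, gen_mul_self, one_mul]

lemma rot_zpow_mul_gen_zero (i : ℤ) : rot ^ i * gen 0 = gen 0 * rot ^ (-i) := by
  have hconj : MulAut.conj (gen 0) rot = rot⁻¹ := by
    rw [MulAut.conj_apply, rot_inv, gen_inv, rot, ← mul_assoc, gen_mul_self, one_mul]
  have := map_zpow (MulAut.conj (gen 0)) rot (-i)
  rw [MulAut.conj_apply, hconj, inv_zpow', neg_neg, gen_inv] at this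
  rw [← this, mul_assoc, gen_mul_self, mul_one]

lemma exists_gen_mul_eq_rot_zpow_or_eq_gen_zero_mul {x : InfDihedral} (j : Fin 2)
    (hx : ∃ i : ℤ, x = rot ^ i ∨ x = gen 0 * rot ^ i) :
    ∃ i : ℤ, gen j * x = rot ^ i ∨ gen j * x = gen 0 * rot ^ i := by
  obtain rfl | rfl : j = 0 ∨ j = 1 := by fin_cases j <;> simp
  all_goals obtain ⟨i, rfl | rfl⟩ := hx
  · exact ⟨i, Or.inr rfl⟩
  · refine ⟨i, Or.inl ?_⟩
    rw [← mul_assoc, gen_mul_self, one_mul]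
  · refine ⟨1 + i, Or.inr ?_⟩
    rw [zpow_add, zpow_one, ← mul_assoc, gen_zero_mul_rot]
  · refine ⟨-1 + i, Or.inl ?_⟩
    rw [zpow_add, zpow_neg_one, rot_inv, ← mul_assoc]

lemma exists_eq_rot_zpow_or_eq_gen_zero_mul (g : InfDihedral) :
    ∃ i : ℤ, g = rot ^ i ∨ g = gen 0 * rot ^ i := by
  induction g using CoprodI.induction_left with
  | one => exact ⟨0, Or.inl (zpow_zero rot).symm⟩
  | @mul j m x ih =>
    have hm : m = 1 ∨ m = Multiplicative.ofAdd 1 := by revert m; decide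
    rcases hm with rfl | rfl
    · rwa [map_one, one_mul]
    · exact exists_gen_mul_eq_rot_zpow_or_eq_gen_zero_mul j ih

lemma gen_zero_mul_rot_zpow_mem_conjGens (i : ℤ) :
    gen 0 * rot ^ i ∈ conjGens generators := by
  obtain ⟨m, rfl | rfl⟩ := Int.even_or_odd' i
  · refine ⟨rot ^ (-m), gen 0, Or.inl (Or.inl rfl), ?_⟩
    rw [rot_zpow_mul_gen_zero, neg_neg]
    group
  · refine ⟨rot ^ (-m), gen 1, Or.inl (Or.inr rfl), ?_⟩
    rw [← gen_zero_mul_rot, ← mul_assoc, rot_zpow_mul_gen_zero, neg_neg]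
    group

lemma ciNorm_le_two (g : InfDihedral) : ciNorm generators g ≤ 2 := by
  obtain ⟨i, rfl | rfl⟩ := exists_eq_rot_zpow_or_eq_gen_zero_mul g
  · have h := ciNorm_mul_le_two (gen_mem_conjGens 0)
      (gen_zero_mul_rot_zpow_mem_conjGens i)
    rwa [← mul_assoc, gen_mul_self, one_mul] at h
  · exact (ciNorm_le_one (gen_zero_mul_rot_zpow_mem_conjGens i)).trans one_le_two

noncomputable def parity : InfDihedral →* (Fin 2 → Multiplicative (ZMod 2)) :=
  CoprodI.lift fun i => MonoidHom.mulSingle (fun _ : Fin 2 => Multiplicative (ZMod 2)) i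

lemma parity_gen (i : Fin 2) : parity (gen i) = Pi.mulSingle i (Multiplicative.ofAdd 1) :=
  CoprodI.lift_of _ _

lemma parity_rot : parity rot = fun _ => Multiplicative.ofAdd 1 := by
  rw [rot, map_mul, parity_gen, parity_gen]
  decide

lemma rot_ne_one : rot ≠ 1 := fun h => by
  have h' := congrArg parity h
  rw [parity_rot, map_one parity] at h'
  exact absurd h' (by decide)

lemma rot_not_mem_conjGens : rot ∉ conjGens generators := fun h => by
  obtain ⟨s, hs | hs, hparity⟩ := exists_map_eq_of_mem_conjGens parity h <;>
    rw [hs, parity_rot, parity_gen] at hparity <;> exact absurd hparity (by decide)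

lemma ciNorm_rot : ciNorm generators rot = 2 :=
  ciNorm_mul_eq_two (gen_mem_conjGens 0) (gen_mem_conjGens 1)
    rot_ne_one rot_not_mem_conjGens

end InfDihedral

/-- The infinite dihedral group `ℤ/2 * ℤ/2` with the conjugation-invariant word norm
associated with its two canonical generators has diameter 2: every element has norm
at most 2 and some element has norm exactly 2. -/
theorem infDihedral_diameter_two :
    (∀ g h : InfDihedral,
      ciDist ({Monoid.CoprodI.of (M := fun _ : Fin 2 => Multiplicative (ZMod 2))
          (i := (0 : Fin 2)) (Multiplicative.ofAdd (1 : ZMod 2)),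
        Monoid.CoprodI.of (M := fun _ : Fin 2 => Multiplicative (ZMod 2))
          (i := (1 : Fin 2)) (Multiplicative.ofAdd (1 : ZMod 2))} : Set InfDihedral)
        g h ≤ 2) ∧
    (∃ g h : InfDihedral,
      ciDist ({Monoid.CoprodI.of (M := fun _ : Fin 2 => Multiplicative (ZMod 2))
          (i := (0 : Fin 2)) (Multiplicative.ofAdd (1 : ZMod 2)),
        Monoid.CoprodI.of (M := fun _ : Fin 2 => Multiplicative (ZMod 2))
          (i := (1 : Fin 2)) (Multiplicative.ofAdd (1 : ZMod 2))} : Set InfDihedral)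
        g h = 2) := by
  refine ⟨fun g h => ?_, InfDihedral.rot, 1, ?_⟩
  · change (ciNorm InfDihedral.generators (g * h⁻¹) : ℝ) ≤ 2
    exact_mod_cast InfDihedral.ciNorm_le_two (g * h⁻¹)
  · change (ciNorm InfDihedral.generators (InfDihedral.rot * 1⁻¹) : ℝ) = 2
    rw [inv_one, mul_one, InfDihedral.ciNorm_rot, Nat.cast_ofNat]
end
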